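/- arXiv:0711.0708 — 3 statements merged into one kernel-verified Lean document; each statement's English description precedes it below -/
import Mathlib

section
/- Let Ω be a set of subspaces of F_q^{1×M} such that any two distinct members of Ω are at subspace distance at least D from each other. Let X ∈ F_q^{n×M} with ⟨X⟩ ∈ Ω, let A ∈ F_q^{N×n} with rank A ≥ n − ρ, let Z ∈ F_q^{ℓ×M} with at most t nonzero rows, let B ∈ F_q^{N×ℓ}, and set Y = AX + BZ. If 2(2t + ρ) < D, then for every V ∈ Ω with V ≠ ⟨X⟩ one has d_S(⟨X⟩, ⟨Y⟩) < d_S(V, ⟨Y⟩); that is, ⟨X⟩ is the unique minimizer over Ω of the subspace distance to ⟨Y⟩, so minimum subspace distance decoding is guaranteed to recover ⟨X⟩. -/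
/-!
Every row of `Y = AX + BZ` lies in `⟨X⟩ + ⟨Z⟩`, and every row of `AX = Y - BZ` lies in
`⟨Y⟩ + ⟨Z⟩`, where `⟨AX⟩ ≤ ⟨X⟩` has dimension at least `dim ⟨X⟩ - ρ` by Sylvester's rank
inequality. Comparing dimensions of sums and intersections then gives
`d_S(⟨X⟩, ⟨Y⟩) ≤ 2 dim ⟨Z⟩ + ρ ≤ 2t + ρ < D / 2`, and for any other codeword `V` the triangle
inequality for `d_S` yields `d_S(V, ⟨Y⟩) ≥ D - d_S(⟨X⟩, ⟨Y⟩) > 2t + ρ`.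
-/

/-- The row space of a matrix: the span of its rows. -/
noncomputable def rowSpace {F : Type*} [Field F] {ι κ : Type*}
    (M : Matrix ι κ F) : Submodule F (κ → F) :=
  Submodule.span F (Set.range fun i => M i)

/-- The subspace distance `d_S(U,V) = dim(U + V) - dim(U ∩ V)`. -/
noncomputable def sDist {F : Type*} [Field F] {κ : Type*}
    (U V : Submodule F (κ → F)) : ℕ :=
  Module.finrank F ↥(U ⊔ V) - Module.finrank F ↥(U ⊓ V)

open Module

section FiniteDimensional

variable {K V : Type*} [DivisionRing K] [AddCommGroup V] [Module K V] [FiniteDimensional K V]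

theorem Submodule.finrank_inf_add_finrank_inf_le (U W X : Submodule K V) :
    finrank K ↥(U ⊓ W) + finrank K ↥(W ⊓ X) ≤ finrank K W + finrank K ↥(U ⊓ X) := by
  have hsup : finrank K ↥(U ⊓ W ⊔ W ⊓ X) ≤ finrank K W :=
    Submodule.finrank_mono (sup_le inf_le_right inf_le_left)
  have hinf : finrank K ↥(U ⊓ W ⊓ (W ⊓ X)) ≤ finrank K ↥(U ⊓ X) :=
    Submodule.finrank_mono
      (le_inf (inf_le_left.trans inf_le_left) (inf_le_right.trans inf_le_right))
  have := Submodule.finrank_sup_add_finrank_inf_eq (U ⊓ W) (W ⊓ X)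
  omega

theorem Submodule.finrank_le_finrank_map_add_finrank_ker {W : Type*} [AddCommGroup W]
    [Module K W] (f : V →ₗ[K] W) (S : Submodule K V) :
    finrank K S ≤ finrank K (S.map f) + finrank K (LinearMap.ker f) := by
  have hrank := (f.comp S.subtype).finrank_range_add_finrank_ker
  rw [LinearMap.range_comp, Submodule.range_subtype, LinearMap.ker_comp] at hrank
  have hker : finrank K ((LinearMap.ker f).comap S.subtype) ≤ finrank K (LinearMap.ker f) := by
    rw [← Submodule.finrank_map_subtype_eq]
    exact Submodule.finrank_mono (Submodule.map_comap_le _ _)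
  omega

end FiniteDimensional

/-- Sylvester's rank inequality. -/
theorem Matrix.rank_add_rank_le_rank_mul_add_card {K l m n : Type*} [Field K] [Fintype m]
    [Fintype n] (A : Matrix l m K) (B : Matrix m n K) :
    A.rank + B.rank ≤ (A * B).rank + Fintype.card m := by
  have hAB : LinearMap.range (A * B).mulVecLin =
      (LinearMap.range B.mulVecLin).map A.mulVecLin := by
    rw [Matrix.mulVecLin_mul, LinearMap.range_comp]
  have hA := A.mulVecLin.finrank_range_add_finrank_ker
  rw [Module.finrank_fintype_fun_eq_card] at hA
  have := Submodule.finrank_le_finrank_map_add_finrank_ker A.mulVecLin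
    (LinearMap.range B.mulVecLin)
  rw [Matrix.rank, Matrix.rank, Matrix.rank, hAB]
  omega

section SubspaceDistance

variable {F : Type*} [Field F] {κ : Type*}

theorem sDist_comm (U V : Submodule F (κ → F)) : sDist U V = sDist V U := by
  rw [sDist, sDist, sup_comm, inf_comm]

variable [Finite κ]

theorem sDist_add_two_mul_finrank_inf (U V : Submodule F (κ → F)) :
    sDist U V + 2 * finrank F ↥(U ⊓ V) = finrank F U + finrank F V := by
  have hsum := Submodule.finrank_sup_add_finrank_inf_eq U V
  have hle : finrank F ↥(U ⊓ V) ≤ finrank F ↥(U ⊔ V) :=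
    Submodule.finrank_mono (inf_le_left.trans le_sup_left)
  rw [sDist]
  omega

theorem sDist_triangle (U V W : Submodule F (κ → F)) :
    sDist U W ≤ sDist U V + sDist V W := by
  have := Submodule.finrank_inf_add_finrank_inf_le U V W
  have := sDist_add_two_mul_finrank_inf U V
  have := sDist_add_two_mul_finrank_inf V W
  have := sDist_add_two_mul_finrank_inf U W
  omega

theorem sDist_add_finrank_le {X Y Z W : Submodule F (κ → F)} (hY : Y ≤ X ⊔ Z) (hWX : W ≤ X)
    (hWY : W ≤ Y ⊔ Z) : sDist X Y + finrank F W ≤ finrank F X + 2 * finrank F Z := by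
  have hXY := sDist_add_two_mul_finrank_inf X Y
  have hsumWY := Submodule.finrank_sup_add_finrank_inf_eq W Y
  have hsupXY : finrank F ↥(X ⊔ Y) ≤ finrank F X + finrank F Z :=
    (Submodule.finrank_mono (sup_le le_sup_left hY)).trans
      (Submodule.finrank_add_le_finrank_add_finrank X Z)
  have hsupWY : finrank F ↥(W ⊔ Y) ≤ finrank F Y + finrank F Z :=
    (Submodule.finrank_mono (sup_le hWY le_sup_left)).trans
      (Submodule.finrank_add_le_finrank_add_finrank Y Z)
  have hinf : finrank F ↥(W ⊓ Y) ≤ finrank F ↥(X ⊓ Y) :=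
    Submodule.finrank_mono (inf_le_inf_right Y hWX)
  have hsum := Submodule.finrank_sup_add_finrank_inf_eq X Y
  omega

end SubspaceDistance

section RowSpace

variable {F : Type*} [Field F] {l m n : Type*}

theorem rowSpace_le_iff {P : Matrix m n F} {U : Submodule F (n → F)} :
    rowSpace P ≤ U ↔ ∀ i, P i ∈ U :=
  Submodule.span_le.trans Set.range_subset_iff

theorem row_mem_rowSpace (P : Matrix m n F) (i : m) : P i ∈ rowSpace P :=
  Submodule.subset_span ⟨i, rfl⟩

theorem rowSpace_mul_le [Fintype m] (A : Matrix l m F) (P : Matrix m n F) :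
    rowSpace (A * P) ≤ rowSpace P := by
  refine rowSpace_le_iff.2 fun i => ?_
  have hrow : (A * P) i = ∑ j, A i j • P j := by
    ext k
    simp [Matrix.mul_apply, Finset.sum_apply]
  rw [hrow]
  exact Submodule.sum_mem _ fun j _ => Submodule.smul_mem _ _ (row_mem_rowSpace P j)

theorem rowSpace_add_le (P Q : Matrix m n F) : rowSpace (P + Q) ≤ rowSpace P ⊔ rowSpace Q :=
  rowSpace_le_iff.2 fun i => Submodule.add_mem_sup (row_mem_rowSpace P i) (row_mem_rowSpace Q i)

theorem rowSpace_sub_le (P Q : Matrix m n F) : rowSpace (P - Q) ≤ rowSpace P ⊔ rowSpace Q :=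
  rowSpace_le_iff.2 fun i => Submodule.sub_mem_sup (row_mem_rowSpace P i) (row_mem_rowSpace Q i)

theorem finrank_rowSpace [Finite m] [Fintype n] (P : Matrix m n F) :
    finrank F (rowSpace P) = P.rank :=
  (P.rank_eq_finrank_span_row).symm

theorem sDist_rowSpace_mul_add_mul_add_rank_le [Fintype l] [Fintype m] [Fintype n] {k : Type*}
    [Fintype k] (X : Matrix m n F) (A : Matrix l m F) (Z : Matrix k n F) (B : Matrix l k F) :
    sDist (rowSpace X) (rowSpace (A * X + B * Z)) + A.rank ≤ Fintype.card m + 2 * Z.rank := by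
  have hY : rowSpace (A * X + B * Z) ≤ rowSpace X ⊔ rowSpace Z :=
    (rowSpace_add_le _ _).trans (sup_le_sup (rowSpace_mul_le A X) (rowSpace_mul_le B Z))
  have hAX : rowSpace (A * X) ≤ rowSpace (A * X + B * Z) ⊔ rowSpace Z := by
    simpa using (rowSpace_sub_le (A * X + B * Z) (B * Z)).trans
      (sup_le_sup_left (rowSpace_mul_le B Z) _)
  have hdist := sDist_add_finrank_le hY (rowSpace_mul_le A X) hAX
  have hsylvester := A.rank_add_rank_le_rank_mul_add_card X
  rw [finrank_rowSpace, finrank_rowSpace, finrank_rowSpace] at hdist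
  omega

open scoped Classical in
theorem Matrix.rank_le_card_filter_row_ne_zero [Fintype m] [Fintype n] (Z : Matrix m n F) :
    Z.rank ≤ (Finset.univ.filter fun i => Z i ≠ 0).card :=
  Z.rank_le_card_of_support_subset _ fun i (hi : Z i ≠ 0) => by simpa using hi

end RowSpace

open scoped Classical in
theorem min_subspace_distance_decoding_general
    {F : Type*} [Field F] {n N ℓ M : ℕ} {ρ t D : ℕ}
    (Ω : Set (Submodule F (Fin M → F)))
    (hΩ : ∀ U ∈ Ω, ∀ V ∈ Ω, U ≠ V → D ≤ sDist U V)
    (X : Matrix (Fin n) (Fin M) F) (hX : rowSpace X ∈ Ω)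
    (A : Matrix (Fin N) (Fin n) F) (hA : (n : ℤ) - (ρ : ℤ) ≤ (A.rank : ℤ))
    (Z : Matrix (Fin ℓ) (Fin M) F)
    (hZ : (Finset.univ.filter fun i => Z i ≠ 0).card ≤ t)
    (B : Matrix (Fin N) (Fin ℓ) F)
    (Y : Matrix (Fin N) (Fin M) F) (hY : Y = A * X + B * Z)
    (hD : 2 * (2 * t + ρ) < D) :
    ∀ V ∈ Ω, V ≠ rowSpace X →
      sDist (rowSpace X) (rowSpace Y) < sDist V (rowSpace Y) := by
  intro V hV hVX
  have hXY := sDist_rowSpace_mul_add_mul_add_rank_le X A Z B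
  rw [Fintype.card_fin, ← hY] at hXY
  have hZt := (Matrix.rank_le_card_filter_row_ne_zero Z).trans hZ
  have hDX := hΩ V hV _ hX hVX
  have htri := sDist_triangle V (rowSpace Y) (rowSpace X)
  rw [sDist_comm (rowSpace Y)] at htri
  omega

open scoped Classical in
/-- if a subspace code `Ω` has minimum distance at least `D`,
`⟨X⟩ ∈ Ω`, `Y = AX + BZ` with `rank A ≥ n − ρ`, `Z` has at most `t` nonzero
rows, and `2(2t + ρ) < D`, then `⟨X⟩` is the unique minimizer over `Ω` of the
subspace distance to `⟨Y⟩`. -/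
theorem min_subspace_distance_decoding
    {F : Type*} [Field F] [Fintype F] {n N ℓ M : ℕ} {ρ t D : ℕ}
    (Ω : Set (Submodule F (Fin M → F)))
    (hΩ : ∀ U ∈ Ω, ∀ V ∈ Ω, U ≠ V → D ≤ sDist U V)
    (X : Matrix (Fin n) (Fin M) F) (hX : rowSpace X ∈ Ω)
    (A : Matrix (Fin N) (Fin n) F) (hA : (n : ℤ) - (ρ : ℤ) ≤ (A.rank : ℤ))
    (Z : Matrix (Fin ℓ) (Fin M) F)
    (hZ : (Finset.univ.filter fun i => Z i ≠ 0).card ≤ t)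
    (B : Matrix (Fin N) (Fin ℓ) F)
    (Y : Matrix (Fin N) (Fin M) F) (hY : Y = A * X + B * Z)
    (hD : 2 * (2 * t + ρ) < D) :
    ∀ V ∈ Ω, V ≠ rowSpace X →
      sDist (rowSpace X) (rowSpace Y) < sDist V (rowSpace Y) :=
  min_subspace_distance_decoding_general Ω hΩ X hX A hA Z hZ B Y hY hD
end

section
/- Let x ∈ F_q^{n×m}, let X = [I_n | x] ∈ F_q^{n×(n+m)}, and let Y = [Â | y] ∈ F_q^{n×(n+m)} where Â ∈ F_q^{n×n} is invertible and y ∈ F_q^{n×m}. Then d_S(⟨X⟩, ⟨Y⟩) = 2·rank(Â^{-1}y − x) = 2·d_R(x, Â^{-1}y). -/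
/-!
Left multiplication by an invertible matrix does not change the row space, so
`⟨[Â | y]⟩ = ⟨[I | Â⁻¹y]⟩` and it suffices to compare `⟨[I | x]⟩` with `⟨[I | z]⟩`.
Both have dimension `n`, since `a ↦ a [I | x]` is injective. A vector lies in both exactly
when it is `a [I | x] = a [I | z]`, i.e. when `a (z - x) = 0`; so the intersection has dimension
`n - rank (z - x)`, and `d_S = 2 (n - dim (U ∩ V)) = 2 rank (z - x)`.
-/

open Matrix Module

lemma sDist_eq_two_mul_of_finrank_eq {F κ : Type*} [Field F] [Finite κ]
    {U V : Submodule F (κ → F)} (h : finrank F U = finrank F V) :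
    sDist U V = 2 * (finrank F U - finrank F ↥(U ⊓ V)) := by
  have hsup := Submodule.finrank_sup_add_finrank_inf_eq U V
  have hinf := Submodule.finrank_mono (inf_le_left : U ⊓ V ≤ U)
  rw [sDist]
  omega

section RowSpace

variable {F ι ι' κ : Type*} [Field F]

lemma rowSpace_eq_range_vecMulLinear [Fintype ι] (M : Matrix ι κ F) :
    rowSpace M = LinearMap.range M.vecMulLinear :=
  (range_vecMulLinear M).symm

lemma finrank_range_vecMulLinear [Fintype ι] [Fintype κ] (M : Matrix ι κ F) :
    finrank F (LinearMap.range M.vecMulLinear) = M.rank := by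
  rw [range_vecMulLinear, rank_eq_finrank_span_row]

lemma rowSpace_mul_le_s7 [Fintype ι] [Fintype ι'] (A : Matrix ι' ι F) (M : Matrix ι κ F) :
    rowSpace (A * M) ≤ rowSpace M := by
  have hcomp : (A * M).vecMulLinear = M.vecMulLinear ∘ₗ A.vecMulLinear := by
    ext v : 1
    simp [vecMul_vecMul]
  rw [rowSpace_eq_range_vecMulLinear, rowSpace_eq_range_vecMulLinear, hcomp]
  exact LinearMap.range_comp_le_range _ _

lemma rowSpace_mul_of_isUnit [Fintype ι] [DecidableEq ι] {A : Matrix ι ι F} (hA : IsUnit A)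
    (M : Matrix ι κ F) : rowSpace (A * M) = rowSpace M := by
  refine le_antisymm (rowSpace_mul_le_s7 A M) ?_
  simpa [← Matrix.mul_assoc, nonsing_inv_mul _ ((isUnit_iff_isUnit_det A).mp hA)]
    using rowSpace_mul_le_s7 A⁻¹ (A * M)

end RowSpace

section IdentityBlock

variable {F ι κ : Type*} [Field F] [Fintype ι] [DecidableEq ι]

lemma vecMul_fromCols_one (x : Matrix ι κ F) (a : ι → F) :
    a ᵥ* fromCols (1 : Matrix ι ι F) x = Sum.elim a (a ᵥ* x) := by
  simp [vecMul_fromCols]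

lemma vecMulLinear_fromCols_one_injective (x : Matrix ι κ F) :
    Function.Injective (fromCols (1 : Matrix ι ι F) x).vecMulLinear := fun a b hab => by
  simpa [vecMul_fromCols_one] using congrArg (fun w => w ∘ Sum.inl) hab

lemma finrank_rowSpace_fromCols_one (x : Matrix ι κ F) :
    finrank F (rowSpace (fromCols (1 : Matrix ι ι F) x)) = Fintype.card ι := by
  rw [rowSpace_eq_range_vecMulLinear,
    LinearMap.finrank_range_of_inj (vecMulLinear_fromCols_one_injective x),
    finrank_fintype_fun_eq_card]

lemma rowSpace_fromCols_one_inf (x z : Matrix ι κ F) :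
    rowSpace (fromCols (1 : Matrix ι ι F) x) ⊓ rowSpace (fromCols 1 z)
      = (LinearMap.ker (z - x).vecMulLinear).map (fromCols (1 : Matrix ι ι F) x).vecMulLinear := by
  ext w
  simp only [rowSpace_eq_range_vecMulLinear, Submodule.mem_inf, LinearMap.mem_range,
    Submodule.mem_map, LinearMap.mem_ker, vecMulLinear_apply, vecMul_fromCols_one, vecMul_sub,
    sub_eq_zero]
  constructor
  · rintro ⟨⟨a, rfl⟩, b, hba⟩
    obtain ⟨rfl, hxz⟩ := Sum.elim_eq_iff.mp hba
    exact ⟨b, hxz, rfl⟩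
  · rintro ⟨a, hxz, rfl⟩
    exact ⟨⟨a, rfl⟩, a, by rw [hxz]⟩

lemma finrank_rowSpace_fromCols_one_inf_add_rank [Fintype κ] (x z : Matrix ι κ F) :
    finrank F ↥(rowSpace (fromCols (1 : Matrix ι ι F) x) ⊓ rowSpace (fromCols 1 z))
      + (z - x).rank = Fintype.card ι := by
  rw [rowSpace_fromCols_one_inf, ← finrank_range_vecMulLinear,
    ← (Submodule.equivMapOfInjective _ (vecMulLinear_fromCols_one_injective x) _).finrank_eq,
    add_comm, LinearMap.finrank_range_add_finrank_ker, finrank_fintype_fun_eq_card]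

lemma sDist_rowSpace_fromCols_one [Fintype κ] (x z : Matrix ι κ F) :
    sDist (rowSpace (fromCols (1 : Matrix ι ι F) x)) (rowSpace (fromCols 1 z))
      = 2 * (z - x).rank := by
  have hinf := finrank_rowSpace_fromCols_one_inf_add_rank x z
  rw [sDist_eq_two_mul_of_finrank_eq (by rw [finrank_rowSpace_fromCols_one,
    finrank_rowSpace_fromCols_one]), finrank_rowSpace_fromCols_one]
  omega

end IdentityBlock

theorem sDist_lifting_invertible_general
    {F : Type*} [Field F] {n m : ℕ}
    (x y : Matrix (Fin n) (Fin m) F)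
    (Ahat : Matrix (Fin n) (Fin n) F) (hAhat : IsUnit Ahat) :
    sDist (rowSpace (Matrix.fromCols (1 : Matrix (Fin n) (Fin n) F) x))
        (rowSpace (Matrix.fromCols Ahat y))
      = 2 * (Ahat⁻¹ * y - x).rank := by
  have hfactor : fromCols Ahat y = Ahat * fromCols 1 (Ahat⁻¹ * y) := by
    rw [mul_fromCols, Matrix.mul_one, ← Matrix.mul_assoc,
      mul_nonsing_inv _ ((isUnit_iff_isUnit_det Ahat).mp hAhat), Matrix.one_mul]
  rw [hfactor, rowSpace_mul_of_isUnit hAhat, sDist_rowSpace_fromCols_one]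

/-- for `X = [I | x]` and `Y = [Ahat | y]` with `Ahat` invertible,
`d_S(⟨X⟩, ⟨Y⟩) = 2·rank(Ahat⁻¹y − x)`. -/
theorem sDist_lifting_invertible
    {F : Type*} [Field F] [Fintype F] [DecidableEq F] {n m : ℕ}
    (x y : Matrix (Fin n) (Fin m) F)
    (Ahat : Matrix (Fin n) (Fin n) F) (hAhat : IsUnit Ahat) :
    sDist (rowSpace (Matrix.fromCols (1 : Matrix (Fin n) (Fin n) F) x))
        (rowSpace (Matrix.fromCols Ahat y))
      = 2 * (Ahat⁻¹ * y - x).rank :=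
  sDist_lifting_invertible_general x y Ahat hAhat
end

section
/- Let e ∈ F_q^{n×m}, L̂ ∈ F_q^{n×μ} with rank L̂ = μ, and Ê ∈ F_q^{δ×m} with rank Ê = δ. Then rank [[L̂ , e],[0 , Ê]] equals the minimum integer τ for which there exist column vectors L_1,…,L_τ ∈ F_q^{n} and row vectors E_1,…,E_τ ∈ F_q^{1×m} such that e = Σ_{j=1}^{τ} L_j E_j, L_j equals the j-th column of L̂ for j = 1,…,μ, and E_{μ+j} equals the j-th row of Ê for j = 1,…,δ. -/
/-!
Let `L'` be a left inverse of `L` and `E'` a right inverse of `E`, and put `π = 1 - L L'`,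
`ρ = 1 - E' E`. Multiplying `[[L, e], [0, E]]` on both sides by suitable block matrices turns
it into `diag(1_μ, π e ρ, 1_δ)`, so its rank is at least `μ + δ + rank (π e ρ)`; and
`e = L (L' e) + (π e E') E + π e ρ`, where a rank factorization of `π e ρ` supplies the
remaining outer products, gives a decomposition of exactly that length. Conversely, a
decomposition of length `τ` factors the block matrix through `F^τ`.
-/

open Matrix

theorem Submodule.finrank_prod {F M N : Type*} [Field F] [AddCommGroup M] [Module F M]
    [AddCommGroup N] [Module F N] (p : Submodule F M) (q : Submodule F N)
    [FiniteDimensional F p] [FiniteDimensional F q] :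
    Module.finrank F (p.prod q) = Module.finrank F p + Module.finrank F q := by
  let e : p.prod q ≃ₗ[F] p × q :=
    { toFun x := (⟨x.1.1, x.2.1⟩, ⟨x.1.2, x.2.2⟩)
      invFun y := ⟨(y.1, y.2), y.1.2, y.2.2⟩
      map_add' _ _ := rfl
      map_smul' _ _ := rfl }
  rw [e.finrank_eq, Module.finrank_prod]

namespace Matrix

theorem sum_range_outer_eq_mul {R : Type*} [NonUnitalNonAssocSemiring R] {m n : Type*}
    (u : ℕ → m → R) (v : ℕ → n → R) (τ : ℕ) :
    ∑ j ∈ Finset.range τ, of (fun i k => u j i * v j k)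
      = of (fun i (j : Fin τ) => u j i) * of (fun (j : Fin τ) k => v j k) := by
  ext i k
  simp [Matrix.sum_apply, mul_apply, Finset.sum_range]

variable {F : Type*} [Field F]

theorem rank_fromBlocks_zero_zero {l m n o : Type*} [Fintype n] [Fintype o]
    (A : Matrix m n F) (D : Matrix l o F) :
    (fromBlocks A 0 0 D).rank = A.rank + D.rank := by
  have h : (fromBlocks A 0 0 D).mulVecLin
      = (LinearEquiv.sumArrowLequivProdArrow m l F F).symm.toLinearMap ∘ₗ
        A.mulVecLin.prodMap D.mulVecLin ∘ₗ
          (LinearEquiv.sumArrowLequivProdArrow n o F F).toLinearMap := by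
    ext v (i | i) <;>
      simp only [mulVecBilin_apply, fromBlocks_mulVec, zero_mulVec, add_zero, zero_add,
        Sum.elim_inl, Sum.elim_inr, LinearMap.coe_comp, LinearEquiv.coe_coe, Function.comp_apply,
        LinearMap.prodMap_apply, LinearEquiv.sumArrowLequivProdArrow_symm_apply_inl,
        LinearEquiv.sumArrowLequivProdArrow_symm_apply_inr] <;>
      rfl
  rw [rank, h, LinearMap.range_comp, LinearMap.range_comp, LinearEquiv.range, Submodule.map_top,
    LinearEquiv.finrank_map_eq, LinearMap.range_prodMap, Submodule.finrank_prod]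
  rfl

variable {k l m n : Type*} [Fintype n]

theorem exists_rank_factorization [DecidableEq n] (A : Matrix m n F) :
    ∃ (X : Matrix m (Fin A.rank) F) (Y : Matrix (Fin A.rank) n F), A = X * Y := by
  let e : LinearMap.range A.mulVecLin ≃ₗ[F] (Fin A.rank → F) :=
    LinearEquiv.ofFinrankEq _ _ (by rw [Module.finrank_fin_fun]; rfl)
  refine ⟨LinearMap.toMatrix' ((LinearMap.range A.mulVecLin).subtype ∘ₗ e.symm.toLinearMap),
    LinearMap.toMatrix' (e.toLinearMap ∘ₗ A.mulVecLin.rangeRestrict), toLin'.injective ?_⟩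
  rw [toLin'_mul, toLin'_toMatrix', toLin'_toMatrix']
  refine LinearMap.ext fun v => ?_
  simp

variable [Fintype m]

theorem exists_mul_eq_one_of_rank_eq_card_height [DecidableEq m] {A : Matrix m n F}
    (hA : A.rank = Fintype.card m) : ∃ B : Matrix n m F, A * B = 1 := by
  classical
  have hsurj : LinearMap.range A.mulVecLin = ⊤ :=
    Submodule.eq_top_of_finrank_eq (by rw [← rank, hA, Module.finrank_fintype_fun_eq_card])
  obtain ⟨g, hg⟩ := A.mulVecLin.exists_rightInverse_of_surjective hsurj
  refine ⟨LinearMap.toMatrix' g, toLin'.injective ?_⟩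
  rw [toLin'_mul, toLin'_toMatrix', toLin'_one, ← hg]
  rfl

theorem exists_mul_eq_one_of_rank_eq_card_width [DecidableEq n] {A : Matrix m n F}
    (hA : A.rank = Fintype.card n) : ∃ B : Matrix n m F, B * A = 1 := by
  obtain ⟨B, hB⟩ :=
    exists_mul_eq_one_of_rank_eq_card_height (A := Aᵀ) (by rwa [rank_transpose])
  exact ⟨Bᵀ, by rw [← transpose_transpose (Bᵀ * A), transpose_mul, transpose_transpose, hB,
    transpose_one]⟩

variable [Fintype k] [Fintype l] [DecidableEq k] [DecidableEq l] [DecidableEq m] [DecidableEq n]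

theorem card_add_rank_fromRows_le_rank_fromBlocks {A : Matrix n k F} {A' : Matrix k n F}
    (hA : A' * A = 1) (B : Matrix n m F) (D : Matrix l m F) :
    Fintype.card k + (fromRows ((1 - A * A') * B) D).rank ≤ (fromBlocks A B 0 D).rank := by
  let P : Matrix (k ⊕ (n ⊕ l)) (n ⊕ l) F :=
    fromBlocks A' 0 (fromRows (1 - A * A') 0) (fromRows 0 1)
  let Q : Matrix (k ⊕ m) (k ⊕ m) F := fromBlocks 1 (-(A' * B)) 0 1
  have hPMQ : P * fromBlocks A B 0 D * Q = fromBlocks 1 0 0 (fromRows ((1 - A * A') * B) D) := by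
    have hπA : (1 - A * A') * A = 0 := by
      rw [Matrix.sub_mul, Matrix.one_mul, Matrix.mul_assoc, hA, Matrix.mul_one, sub_self]
    simp only [P, Q, fromBlocks_multiply, hA, hπA, fromRows_mul, fromRows_zero, fromBlocks_inj,
      Matrix.mul_zero, Matrix.zero_mul, Matrix.one_mul, Matrix.mul_one, Matrix.mul_neg, add_zero,
      zero_add, neg_add_cancel, neg_zero, true_and]
    ext (i | i) j <;> simp
  calc Fintype.card k + (fromRows ((1 - A * A') * B) D).rank
      = (fromBlocks (1 : Matrix k k F) 0 0 (fromRows ((1 - A * A') * B) D)).rank := by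
        rw [rank_fromBlocks_zero_zero, rank_one]
    _ ≤ (fromBlocks A B 0 D).rank := by
        rw [← hPMQ]
        exact (rank_mul_le_left _ _).trans (rank_mul_le_right _ _)

theorem rank_mul_add_card_le_rank_fromRows {D : Matrix l m F} {D' : Matrix m l F}
    (hD : D * D' = 1) (B : Matrix n m F) :
    (B * (1 - D' * D)).rank + Fintype.card l ≤ (fromRows B D).rank := by
  let P : Matrix (n ⊕ l) (n ⊕ l) F := fromBlocks 1 (-(B * D')) 0 1
  let Q : Matrix m (m ⊕ l) F := fromCols (1 - D' * D) D'
  have hPMQ : P * (fromRows B D * Q) = fromBlocks (B * (1 - D' * D)) 0 0 1 := by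
    have hDρ : D * (1 - D' * D) = 0 := by
      rw [Matrix.mul_sub, Matrix.mul_one, ← Matrix.mul_assoc, hD, Matrix.one_mul, sub_self]
    simp [P, Q, fromBlocks_multiply, hD, hDρ]
  calc (B * (1 - D' * D)).rank + Fintype.card l
      = (fromBlocks (B * (1 - D' * D)) 0 0 (1 : Matrix l l F)).rank := by
        rw [rank_fromBlocks_zero_zero, rank_one]
    _ ≤ (fromRows B D).rank := by
        rw [← hPMQ]
        exact (rank_mul_le_right _ _).trans (rank_mul_le_left _ _)

end Matrix

section OuterProductDecomposition

variable {F : Type*} [Field F] {n m μ δ : ℕ}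

theorem rank_fromBlocks_le_of_eq_sum_range {e : Matrix (Fin n) (Fin m) F}
    {L : Matrix (Fin n) (Fin μ) F} {E : Matrix (Fin δ) (Fin m) F} {τ : ℕ}
    {Lv : ℕ → Fin n → F} {Ev : ℕ → Fin m → F} (hτ : μ + δ ≤ τ)
    (he : e = ∑ j ∈ Finset.range τ, of (fun i k => Lv j i * Ev j k))
    (hL : ∀ j : Fin μ, ∀ i, Lv j i = L i j)
    (hE : ∀ j : Fin δ, ∀ k, Ev (μ + (j : ℕ)) k = E j k) :
    (fromBlocks L e 0 E).rank ≤ τ := by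
  let P : Matrix (Fin n) (Fin τ) F := of fun i j => Lv j i
  let Q : Matrix (Fin τ) (Fin m) F := of fun j k => Ev j k
  let S : Matrix (Fin τ) (Fin μ) F :=
    (1 : Matrix (Fin τ) (Fin τ) F).submatrix id (Fin.castLE (by omega))
  let T : Matrix (Fin δ) (Fin τ) F :=
    (1 : Matrix (Fin τ) (Fin τ) F).submatrix (fun j => Fin.castLE hτ (Fin.natAdd μ j)) id
  have hfac : fromBlocks L e 0 E = fromRows P T * fromCols S Q := by
    rw [fromRows_mul_fromCols, he, sum_range_outer_eq_mul]
    congr 1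
    · ext i j
      simp [P, S, mul_apply, one_apply, hL]
    · rw [← submatrix_mul _ _ _ _ _ Function.bijective_id, Matrix.one_mul]
      ext i j
      simp only [submatrix_apply, one_apply, Fin.ext_iff, Fin.val_castLE, Fin.val_natAdd,
        Matrix.zero_apply, right_eq_ite_iff, zero_ne_one, imp_false]
      omega
    · ext i j
      simp [T, Q, mul_apply, one_apply, hE]
  rw [hfac]
  exact (rank_mul_le_left _ _).trans ((rank_le_card_width _).trans (Fintype.card_fin τ).le)

theorem exists_eq_sum_range_of_eq_add_add {r : ℕ} {e : Matrix (Fin n) (Fin m) F}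
    {L : Matrix (Fin n) (Fin μ) F} {C : Matrix (Fin μ) (Fin m) F}
    {D : Matrix (Fin n) (Fin δ) F} {E : Matrix (Fin δ) (Fin m) F}
    {X : Matrix (Fin n) (Fin r) F} {Y : Matrix (Fin r) (Fin m) F}
    (he : e = L * C + D * E + X * Y) :
    ∃ (Lv : ℕ → Fin n → F) (Ev : ℕ → Fin m → F),
      e = ∑ j ∈ Finset.range (μ + δ + r), of (fun i k => Lv j i * Ev j k) ∧
      (∀ j : Fin μ, ∀ i, Lv j i = L i j) ∧
      (∀ j : Fin δ, ∀ k, Ev (μ + (j : ℕ)) k = E j k) := by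
  let cols : Fin (μ + δ + r) → Fin n → F := Fin.append (Fin.append L.col D.col) X.col
  let rows : Fin (μ + δ + r) → Fin m → F := Fin.append (Fin.append C.row E.row) Y.row
  have hcols (j : Fin (μ + δ + r)) : Function.extend Fin.val cols 0 j = cols j :=
    Fin.val_injective.extend_apply _ _ j
  have hrows (j : Fin (μ + δ + r)) : Function.extend Fin.val rows 0 j = rows j :=
    Fin.val_injective.extend_apply _ _ j
  refine ⟨Function.extend Fin.val cols 0, Function.extend Fin.val rows 0, ?_, fun j i => ?_,
    fun j k => ?_⟩
  · rw [he, sum_range_outer_eq_mul]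
    ext i k
    simp [mul_apply, hcols, hrows, Fin.sum_univ_add, cols, rows]
  · simpa [cols] using congrFun (hcols (Fin.castAdd r (Fin.castAdd δ j))) i
  · simpa [rows] using congrFun (hrows (Fin.castAdd r (Fin.natAdd μ j))) k

end OuterProductDecomposition

theorem rank_block_eq_min_decomposition_length_general
    {F : Type*} [Field F] {n m μ δ : ℕ}
    (e : Matrix (Fin n) (Fin m) F)
    (L : Matrix (Fin n) (Fin μ) F) (hL : L.rank = μ)
    (E : Matrix (Fin δ) (Fin m) F) (hE : E.rank = δ) :
    (Matrix.fromBlocks L e 0 E).rank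
      = sInf {τ : ℕ | μ + δ ≤ τ ∧
          ∃ (Lv : ℕ → Fin n → F) (Ev : ℕ → Fin m → F),
            e = ∑ j ∈ Finset.range τ, Matrix.of (fun i k => Lv j i * Ev j k) ∧
            (∀ j : Fin μ, ∀ i, Lv j i = L i j) ∧
            (∀ j : Fin δ, ∀ k, Ev (μ + (j : ℕ)) k = E j k)} := by
  obtain ⟨L', hL'⟩ :=
    exists_mul_eq_one_of_rank_eq_card_width (hL.trans (Fintype.card_fin μ).symm)
  obtain ⟨E', hE'⟩ :=
    exists_mul_eq_one_of_rank_eq_card_height (hE.trans (Fintype.card_fin δ).symm)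
  obtain ⟨X, Y, hXY⟩ := exists_rank_factorization ((1 - L * L') * e * (1 - E' * E))
  have hsplit : e = L * (L' * e) + ((1 - L * L') * e * E') * E + X * Y := by
    rw [← hXY]
    simp only [Matrix.sub_mul, Matrix.mul_sub, Matrix.one_mul, Matrix.mul_one, Matrix.mul_assoc]
    abel
  have hrank : μ + δ + ((1 - L * L') * e * (1 - E' * E)).rank ≤ (fromBlocks L e 0 E).rank := by
    have h₁ := card_add_rank_fromRows_le_rank_fromBlocks hL' e E
    have h₂ := rank_mul_add_card_le_rank_fromRows hE' ((1 - L * L') * e)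
    rw [Fintype.card_fin] at h₁ h₂
    omega
  obtain ⟨Lv, Ev, hsum, hLv, hEv⟩ := exists_eq_sum_range_of_eq_add_add hsplit
  apply le_antisymm
  · refine le_csInf ⟨_, Nat.le_add_right _ _, Lv, Ev, hsum, hLv, hEv⟩ ?_
    rintro τ ⟨hτ, Lv, Ev, hsum, hLv, hEv⟩
    exact rank_fromBlocks_le_of_eq_sum_range hτ hsum hLv hEv
  · refine (Nat.sInf_le ?_).trans hrank
    exact ⟨Nat.le_add_right _ _, Lv, Ev, hsum, hLv, hEv⟩

/-- for `e ∈ F_q^{n×m}`, `L ∈ F_q^{n×μ}` of rank `μ` and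
`E ∈ F_q^{δ×m}` of rank `δ`, the rank of `[[L, e],[0, E]]` equals the least
`τ` for which `e = Σ_{j=1}^{τ} L_j E_j` with `L_j` the `j`-th column of `L`
for `j ≤ μ` and `E_{μ+j}` the `j`-th row of `E` for `j ≤ δ`. -/
theorem rank_block_eq_min_decomposition_length
    {F : Type*} [Field F] [Fintype F] {n m μ δ : ℕ}
    (e : Matrix (Fin n) (Fin m) F)
    (L : Matrix (Fin n) (Fin μ) F) (hL : L.rank = μ)
    (E : Matrix (Fin δ) (Fin m) F) (hE : E.rank = δ) :
    (Matrix.fromBlocks L e 0 E).rank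
      = sInf {τ : ℕ | μ + δ ≤ τ ∧
          ∃ (Lv : ℕ → Fin n → F) (Ev : ℕ → Fin m → F),
            e = ∑ j ∈ Finset.range τ, Matrix.of (fun i k => Lv j i * Ev j k) ∧
            (∀ j : Fin μ, ∀ i, Lv j i = L i j) ∧
            (∀ j : Fin δ, ∀ k, Ev (μ + (j : ℕ)) k = E j k)} :=
  rank_block_eq_min_decomposition_length_general e L hL E hE
end
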